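/- arXiv:2510.12459 — 8 statements merged into one kernel-verified Lean document; each statement's English description precedes it below -/
import Mathlib

section
/- Let φ : R → R be measurable and non-singular. Then φ is strictly non-singular (μ(E) = 0 iff μ(φ⁻¹(E)) = 0) if and only if the composition operator T_φ is injective on equivalence classes of measurable functions. -/
open MeasureTheory

section

variable {α β : Type*} [MeasurableSpace α] [MeasurableSpace β] {μ : Measure α} {ν : Measure β}
  {φ : α → β}

theorem ae_eq_of_comp_ae_eq {γ : Type*} [MeasurableSpace γ] [MeasurableEq γ]
    (hφ : ∀ E : Set β, MeasurableSet E → μ (φ ⁻¹' E) = 0 → ν E = 0) {f g : β → γ}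
    (hf : Measurable f) (hg : Measurable g) (h : f ∘ φ =ᵐ[μ] g ∘ φ) : f =ᵐ[ν] g :=
  ae_iff.mpr <| hφ _ (measurableSet_eq_fun hf hg).compl (ae_iff.mp h)

theorem measure_eq_zero_of_measure_preimage_eq_zero {M : Type*} [Zero M] [One M]
    [NeZero (1 : M)] [MeasurableSpace M]
    (hφ : ∀ f g : β → M, Measurable f → Measurable g → f ∘ φ =ᵐ[μ] g ∘ φ → f =ᵐ[ν] g)
    {E : Set β} (hE : MeasurableSet E) (hE0 : μ (φ ⁻¹' E) = 0) : ν E = 0 := by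
  have hcomp : E.indicator 1 ∘ φ = (φ ⁻¹' E).indicator (1 : α → M) := by
    ext x
    exact (Set.indicator_comp_right φ).symm
  have hind : E.indicator (1 : β → M) =ᵐ[ν] 0 := by
    refine hφ _ 0 (measurable_one.indicator hE) measurable_const ?_
    rwa [hcomp, Pi.zero_comp, Set.indicator_ae_eq_zero, Function.support_one, Set.inter_univ]
  rwa [Set.indicator_ae_eq_zero, Function.support_one, Set.inter_univ] at hind

end

theorem strictlyNonsingular_iff_comp_injective_general {α : Type*} [MeasurableSpace α]
    (μ : Measure α) (φ : α → α)
    (hns : ∀ E : Set α, MeasurableSet E → μ E = 0 → μ (φ ⁻¹' E) = 0) :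
    (∀ E : Set α, MeasurableSet E → (μ E = 0 ↔ μ (φ ⁻¹' E) = 0)) ↔
      (∀ f g : α → ℝ, Measurable f → Measurable g →
        (f ∘ φ) =ᵐ[μ] (g ∘ φ) → f =ᵐ[μ] g) :=
  ⟨fun h _ _ hf hg => ae_eq_of_comp_ae_eq (fun E hE => (h E hE).mpr) hf hg,
    fun h E hE => ⟨hns E hE, measure_eq_zero_of_measure_preimage_eq_zero h hE⟩⟩

/-- Let `φ` be measurable and non-singular. Then `φ` is strictly non-singular
(`μ(E) = 0 ↔ μ(φ⁻¹(E)) = 0`) if and only if the composition operator `f ↦ f ∘ φ`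
is injective on μ-a.e. equivalence classes of measurable functions. -/
theorem strictlyNonsingular_iff_comp_injective {α : Type*} [MeasurableSpace α]
    (μ : Measure α) [SigmaFinite μ] (φ : α → α) (hφ : Measurable φ)
    (hns : ∀ E : Set α, MeasurableSet E → μ E = 0 → μ (φ ⁻¹' E) = 0) :
    (∀ E : Set α, MeasurableSet E → (μ E = 0 ↔ μ (φ ⁻¹' E) = 0)) ↔
      (∀ f g : α → ℝ, Measurable f → Measurable g →
        (f ∘ φ) =ᵐ[μ] (g ∘ φ) → f =ᵐ[μ] g) :=
  strictlyNonsingular_iff_comp_injective_general μ φ hns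
end

section
/- Let φ : R → R satisfy μ(E) ≤ C μ(φ⁻¹(E)) for all measurable E with μ(E) < ∞ (measure-boundedness from below with constant C). Then for every measurable f and every t ≥ 0, (f ∘ φ)*(t) ≥ f*(C t). -/
open MeasureTheory ENNReal

/-- The decreasing rearrangement of `f` with respect to `μ`. -/
noncomputable def rearr {α : Type*} [MeasurableSpace α] (μ : Measure α)
    (f : α → ℝ) (t : ℝ≥0∞) : ℝ≥0∞ :=
  sInf {s : ℝ≥0∞ | μ {x | s < (‖f x‖₊ : ℝ≥0∞)} ≤ t}

/-- If `φ` is measure-bounded from below with constant `C`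
(`μ(E) ≤ C μ(φ⁻¹(E))` for measurable `E` of finite measure), then
`(f ∘ φ)*(t) ≥ f*(C t)` for every measurable `f` and every `t`. -/
theorem rearr_comp_ge_of_measureBoundedBelow {α : Type*} [MeasurableSpace α]
    (μ : Measure α) [SigmaFinite μ] (φ : α → α) (hφ : Measurable φ)
    (C : ℝ≥0∞) (hC0 : 0 < C) (hCtop : C ≠ ⊤)
    (hbound : ∀ E : Set α, MeasurableSet E → μ E < ⊤ → μ E ≤ C * μ (φ ⁻¹' E))
    (f : α → ℝ) (hf : Measurable f) (t : ℝ≥0∞) :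
    rearr μ f (C * t) ≤ rearr μ (f ∘ φ) t := by
  apply sInf_le_sInf
  intro s hs
  simp only [Set.mem_setOf_eq] at hs ⊢
  set E := {x | s < (‖f x‖₊ : ℝ≥0∞)} with hE
  have hEm : MeasurableSet E :=
    measurableSet_lt measurable_const (hf.nnnorm.coe_nnreal_ennreal)
  have hpre : φ ⁻¹' E = {x | s < (‖(f ∘ φ) x‖₊ : ℝ≥0∞)} := rfl
  have key : ∀ n, μ (E ∩ spanningSets μ n) ≤ C * t := by
    intro n
    calc μ (E ∩ spanningSets μ n)
        ≤ C * μ (φ ⁻¹' (E ∩ spanningSets μ n)) :=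
          hbound _ (hEm.inter (measurableSet_spanningSets μ n))
            ((measure_mono Set.inter_subset_right).trans_lt
              (measure_spanningSets_lt_top μ n))
      _ ≤ C * μ (φ ⁻¹' E) :=
          mul_le_mul_right (measure_mono (Set.preimage_mono Set.inter_subset_left)) _
      _ ≤ C * t := mul_le_mul_right (hpre ▸ hs) _
  have hEeq : μ E = ⨆ n, μ (E ∩ spanningSets μ n) := by
    rw [← Directed.measure_iUnion]
    · rw [← Set.inter_iUnion, iUnion_spanningSets, Set.inter_univ]
    · exact (Monotone.directed_le fun i j h =>
        Set.inter_subset_inter_right _ (monotone_spanningSets μ h))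
  rw [hEeq]
  exact iSup_le key
end

section
/- Let φ be measure-bounded from below with constant C (μ(E) ≤ C μ(φ⁻¹(E)) for all E of finite measure). Then T_φ : L¹(μ) → L¹(μ) satisfies ‖f‖₁ ≤ C ‖f ∘ φ‖₁ for every f ∈ L¹; in particular T_φ is injective with closed range on L¹. -/
open MeasureTheory ENNReal Set

/-- If `φ` is measure-bounded and measure-bounded from below with constant `C`, then
`‖f‖₁ ≤ C ‖f ∘ φ‖₁` for every `f ∈ L¹`; in particular `T_φ` is injective with
closed range on `L¹(μ)`. -/
theorem L1_norm_le_comp_of_measureBoundedBelow {α : Type*} [MeasurableSpace α]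
    (μ : Measure α) [SigmaFinite μ] (φ : α → α) (hφ : Measurable φ)
    (A : ℝ≥0∞) (hA0 : 0 < A) (hAtop : A ≠ ⊤)
    (hbound : ∀ E : Set α, MeasurableSet E → μ (φ ⁻¹' E) ≤ A * μ E)
    (C : ℝ≥0∞) (hC0 : 0 < C) (hCtop : C ≠ ⊤)
    (hbelow : ∀ E : Set α, MeasurableSet E → μ E < ⊤ → μ E ≤ C * μ (φ ⁻¹' E)) :
    ∀ f : α → ℝ, MemLp f 1 μ → eLpNorm f 1 μ ≤ C * eLpNorm (f ∘ φ) 1 μ := by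
  intro f hf
  obtain ⟨g, hgm, hfg⟩ := hf.1
  have hgmeas : Measurable g := hgm.measurable
  -- f ∘ φ = g ∘ φ a.e.
  have hnull : μ {x | f x ≠ g x} = 0 := hfg
  have hcompae : f ∘ φ =ᵐ[μ] g ∘ φ := by
    have h1 : μ (toMeasurable μ {x | f x ≠ g x}) = 0 := by
      rw [measure_toMeasurable]; exact hnull
    have h2 : μ (φ ⁻¹' (toMeasurable μ {x | f x ≠ g x})) = 0 := by
      have h := hbound (toMeasurable μ {x | f x ≠ g x}) (measurableSet_toMeasurable μ _)
      rw [h1, mul_zero] at h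
      exact le_antisymm h (by simp)
    refine measure_mono_null ?_ h2
    intro x hx
    exact subset_toMeasurable μ _ hx
  -- μ ≤ C • μ.map φ
  have hle : μ ≤ C • μ.map φ := by
    refine Measure.le_iff.2 fun E hE => ?_
    rw [Measure.smul_apply, Measure.map_apply hφ hE, smul_eq_mul]
    have key : ∀ n, μ (E ∩ spanningSets μ n) ≤ C * μ (φ ⁻¹' E) := fun n => by
      refine (hbelow _ (hE.inter (measurableSet_spanningSets μ n))
        ((measure_mono inter_subset_right).trans_lt (measure_spanningSets_lt_top μ n))).trans ?_
      exact mul_le_mul_right (measure_mono (preimage_mono inter_subset_left)) C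
    calc μ E = μ (⋃ n, E ∩ spanningSets μ n) := by
            rw [← inter_iUnion, iUnion_spanningSets, inter_univ]
      _ = ⨆ n, μ (E ∩ spanningSets μ n) := by
            refine Directed.measure_iUnion (Monotone.directed_le fun m n h => ?_)
            exact inter_subset_inter_right _ (monotone_spanningSets μ h)
      _ ≤ C * μ (φ ⁻¹' E) := iSup_le key
  calc eLpNorm f 1 μ = eLpNorm g 1 μ := eLpNorm_congr_ae hfg
    _ = ∫⁻ x, ‖g x‖₊ ∂μ := by
        rw [eLpNorm_one_eq_lintegral_enorm]; rfl
    _ ≤ ∫⁻ x, ‖g x‖₊ ∂(C • μ.map φ) := lintegral_mono' hle le_rfl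
    _ = C * ∫⁻ x, ‖g x‖₊ ∂(μ.map φ) := lintegral_smul_measure _ _
    _ = C * ∫⁻ x, ‖g (φ x)‖₊ ∂μ := by
        rw [lintegral_map hgmeas.nnnorm.coe_nnreal_ennreal hφ]
    _ = C * eLpNorm (g ∘ φ) 1 μ := by
        rw [eLpNorm_one_eq_lintegral_enorm]; rfl
    _ = C * eLpNorm (f ∘ φ) 1 μ := by
        rw [eLpNorm_congr_ae hcompae]
end

section
/- If T_φ : L¹(μ) → L¹(μ) is injective with closed range (equivalently, there is c > 0 with ‖f‖₁ ≤ c‖f ∘ φ‖₁ for all f ∈ L¹), then φ is measure-bounded from below: μ(E) ≤ c μ(φ⁻¹(E)) for every measurable E with μ(E) < ∞. -/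
open MeasureTheory ENNReal

/-- If `T_φ : L¹ → L¹` is injective with closed range, equivalently there is `c > 0`
with `‖f‖₁ ≤ c ‖f ∘ φ‖₁` for all `f ∈ L¹`, then `φ` is measure-bounded from below:
`μ(E) ≤ c μ(φ⁻¹(E))` for every measurable `E` of finite measure. -/
theorem measureBoundedBelow_of_comp_injective_closedRange {α : Type*} [MeasurableSpace α]
    (μ : Measure α) [SigmaFinite μ] (φ : α → α) (hφ : Measurable φ)
    (A : ℝ≥0∞) (hA0 : 0 < A) (hAtop : A ≠ ⊤)
    (hbound : ∀ E : Set α, MeasurableSet E → μ (φ ⁻¹' E) ≤ A * μ E)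
    (c : ℝ≥0∞) (hc0 : 0 < c) (hctop : c ≠ ⊤)
    (hlow : ∀ f : α → ℝ, MemLp f 1 μ → eLpNorm f 1 μ ≤ c * eLpNorm (f ∘ φ) 1 μ) :
    ∀ E : Set α, MeasurableSet E → μ E < ⊤ → μ E ≤ c * μ (φ ⁻¹' E) := by
  intro E hE hEfin
  have hmem : MemLp (E.indicator fun _ => (1 : ℝ)) 1 μ :=
    memLp_indicator_const 1 hE 1 (Or.inr hEfin.ne)
  have h := hlow _ hmem
  have hcomp : (E.indicator fun _ => (1 : ℝ)) ∘ φ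
      = (φ ⁻¹' E).indicator fun _ => (1 : ℝ) := by
    ext x
    simp only [Set.indicator, Function.comp]; rfl
  rw [hcomp] at h
  rw [eLpNorm_indicator_const hE one_ne_zero one_ne_top,
    eLpNorm_indicator_const (hφ hE) one_ne_zero one_ne_top] at h
  simpa using h
end

section
/- (Hardy's lemma) Let h₁, h₂ : [0,∞) → [0,∞) be measurable with ∫₀ᵗ h₁ dλ ≤ ∫₀ᵗ h₂ dλ for all t > 0, and let φ : [0,∞) → [0,∞) be non-increasing. Then ∫₀^∞ h₁ φ dλ ≤ ∫₀^∞ h₂ φ dλ. -/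
open MeasureTheory ENNReal Set

lemma hardy_meas_level (b : ℝ≥0∞) :
    volume {y : ℝ | 0 < y ∧ ENNReal.ofReal y < b} = b := by
  rcases eq_or_ne b ∞ with rfl | hb
  · have : {y : ℝ | 0 < y ∧ ENNReal.ofReal y < ∞} = Ioi 0 := by
      ext y; simp [ofReal_lt_top]
    rw [this, Real.volume_Ioi]
  · have : {y : ℝ | 0 < y ∧ ENNReal.ofReal y < b} = Ioo 0 b.toReal := by
      ext y
      exact ⟨fun ⟨hy, hlt⟩ => ⟨hy, (ENNReal.ofReal_lt_iff_lt_toReal hy.le hb).1 hlt⟩,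
        fun ⟨hy, hlt⟩ => ⟨hy, (ENNReal.ofReal_lt_iff_lt_toReal hy.le hb).2 hlt⟩⟩
    rw [this, Real.volume_Ioo, sub_zero, ENNReal.ofReal_toReal hb]

lemma hardy_expand (h : ℝ → ℝ≥0∞) (hm : Measurable h) :
    ∫⁻ s in Ioi (0:ℝ), h s = ⨆ n : ℕ, ∫⁻ s in Ioc (0:ℝ) (n+1), h s := by
  rw [← lintegral_indicator measurableSet_Ioi]
  have hmono : Monotone fun (n : ℕ) => (Ioc (0:ℝ) (n+1)).indicator h := by
    intro m n hmn
    exact Set.indicator_le_indicator_of_subset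
      (Ioc_subset_Ioc_right (by exact_mod_cast Nat.add_le_add_right hmn 1))
      (fun _ => zero_le)
  have := lintegral_iSup (μ := volume)
    (fun n : ℕ => hm.indicator measurableSet_Ioc) hmono
  simp_rw [lintegral_indicator measurableSet_Ioc] at this
  rw [← this]
  congr 1
  funext s
  by_cases hs : 0 < s
  · obtain ⟨n, hn⟩ : ∃ n : ℕ, s ≤ n + 1 :=
      ⟨⌈s⌉₊, le_trans (Nat.le_ceil s) (by linarith [Nat.le_ceil s])⟩
    rw [indicator_of_mem (show s ∈ Ioi (0:ℝ) from hs) h]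
    apply le_antisymm
    · exact le_iSup_of_le n (le_of_eq (indicator_of_mem (show s ∈ Ioc (0:ℝ) (n+1) from ⟨hs, hn⟩) h).symm)
    · exact iSup_le fun m => Set.indicator_le' (fun _ _ => le_rfl) (fun _ _ => zero_le) s
  · have h1 : s ∉ Ioi (0:ℝ) := hs
    have h2 : ∀ n : ℕ, s ∉ Ioc (0:ℝ) (n+1) := fun n hn => hs hn.1
    simp [indicator_of_notMem h1, indicator_of_notMem (h2 _)]

lemma hardy_key (h₁ h₂ : ℝ → ℝ≥0∞) (hm₁ : Measurable h₁) (hm₂ : Measurable h₂)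
    (hle : ∀ t : ℝ, 0 < t →
      ∫⁻ s in Ioc (0 : ℝ) t, h₁ s ≤ ∫⁻ s in Ioc (0 : ℝ) t, h₂ s)
    (S : Set ℝ) (hS : S ⊆ Ioi 0)
    (hlow : ∀ s ∈ S, ∀ s', 0 < s' → s' ≤ s → s' ∈ S) :
    ∫⁻ s in S, h₁ s ≤ ∫⁻ s in S, h₂ s := by
  rcases S.eq_empty_or_nonempty with rfl | hne
  · simp
  by_cases hbdd : BddAbove S
  · set t := sSup S with ht
    obtain ⟨s₀, hs₀⟩ := hne
    have ht0 : 0 < t := lt_of_lt_of_le (hS hs₀) (le_csSup hbdd hs₀)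
    have hsub : S ⊆ Ioc 0 t := fun s hs => ⟨hS hs, le_csSup hbdd hs⟩
    have hsub' : Ioo 0 t ⊆ S := by
      intro s hs
      obtain ⟨u, hu, hsu⟩ := exists_lt_of_lt_csSup ⟨s₀, hs₀⟩ hs.2
      exact hlow u hu s hs.1 hsu.le
    have hae : S =ᵐ[volume] Ioc 0 t := by
      rw [MeasureTheory.ae_eq_set]
      constructor
      · rw [Set.diff_eq_empty.2 hsub]; simp
      · refine measure_mono_null (fun s hs => ?_) (measure_singleton t)
        rcases lt_or_eq_of_le hs.1.2 with h | h
        · exact absurd (hsub' ⟨hs.1.1, h⟩) hs.2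
        · exact h
    rw [setLIntegral_congr hae, setLIntegral_congr hae]
    exact hle t ht0
  · have hSeq : S = Ioi 0 := by
      apply Set.Subset.antisymm hS
      intro s hs
      obtain ⟨u, hu, hsu⟩ := (not_bddAbove_iff.1 hbdd) s
      exact hlow u hu s hs hsu.le
    subst hSeq
    rw [hardy_expand h₁ hm₁, hardy_expand h₂ hm₂]
    exact iSup_mono fun n => hle _ (by positivity)

/-- Hardy's lemma: if `∫₀ᵗ h₁ ≤ ∫₀ᵗ h₂` for all `t > 0` and `φ : [0,∞) → [0,∞)` is
non-increasing, then `∫₀^∞ h₁ φ ≤ ∫₀^∞ h₂ φ`. -/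
theorem hardy_lemma (h₁ h₂ φ : ℝ → ℝ≥0∞)
    (hm₁ : Measurable h₁) (hm₂ : Measurable h₂) (hmφ : Measurable φ)
    (hφ : ∀ a b : ℝ, 0 ≤ a → a ≤ b → φ b ≤ φ a)
    (hle : ∀ t : ℝ, 0 < t →
      ∫⁻ s in Set.Ioc (0 : ℝ) t, h₁ s ≤ ∫⁻ s in Set.Ioc (0 : ℝ) t, h₂ s) :
    ∫⁻ s in Set.Ioi (0 : ℝ), h₁ s * φ s ≤ ∫⁻ s in Set.Ioi (0 : ℝ), h₂ s * φ s := by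
  -- level sets
  have hBmeas : ∀ y : ℝ, MeasurableSet {s : ℝ | ENNReal.ofReal y < φ s} :=
    fun y => measurableSet_lt measurable_const hmφ
  have layer : ∀ (h : ℝ → ℝ≥0∞), Measurable h →
      ∫⁻ s in Ioi (0:ℝ), h s * φ s
        = ∫⁻ y in Ioi (0:ℝ), ∫⁻ s in {s | ENNReal.ofReal y < φ s} ∩ Ioi 0, h s := by
    intro h hm
    have step1 : ∀ s : ℝ, h s * φ s
        = ∫⁻ y in Ioi (0:ℝ), {y' | ENNReal.ofReal y' < φ s}.indicator (fun _ => h s) y := by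
      intro s
      have hA : MeasurableSet {y' : ℝ | ENNReal.ofReal y' < φ s} :=
        measurableSet_lt ENNReal.measurable_ofReal measurable_const
      rw [lintegral_indicator_const hA, Measure.restrict_apply hA]
      have : {y' : ℝ | ENNReal.ofReal y' < φ s} ∩ Ioi 0
          = {y : ℝ | 0 < y ∧ ENNReal.ofReal y < φ s} := by
        ext y; exact ⟨fun ⟨a, b⟩ => ⟨b, a⟩, fun ⟨a, b⟩ => ⟨b, a⟩⟩
      rw [this, hardy_meas_level, mul_comm]
    simp_rw [step1]
    rw [lintegral_lintegral_swap]
    · congr 1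
      funext y
      have : (fun s => {y' | ENNReal.ofReal y' < φ s}.indicator (fun _ => h s) y)
          = ({s | ENNReal.ofReal y < φ s}).indicator h := by
        funext s
        simp only [Set.indicator_apply, Set.mem_setOf_eq]
      rw [this, lintegral_indicator (hBmeas y),
        Measure.restrict_restrict (hBmeas y)]
    · -- AEMeasurable of the uncurried function
      apply Measurable.aemeasurable
      have : (Function.uncurry fun s y =>
          {y' | ENNReal.ofReal y' < φ s}.indicator (fun _ => h s) y)
          = ({p : ℝ × ℝ | ENNReal.ofReal p.2 < φ p.1}).indicator (fun p => h p.1) := by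
        funext p
        simp only [Function.uncurry, Set.indicator_apply, Set.mem_setOf_eq]
      rw [this]
      exact (hm.comp measurable_fst).indicator
        (measurableSet_lt (ENNReal.measurable_ofReal.comp measurable_snd)
          (hmφ.comp measurable_fst))
  rw [layer h₁ hm₁, layer h₂ hm₂]
  apply lintegral_mono
  intro y
  apply hardy_key h₁ h₂ hm₁ hm₂ hle
  · exact Set.inter_subset_right
  · rintro s ⟨hs1, hs2⟩ s' h0 hss
    exact ⟨lt_of_lt_of_le hs1 (hφ s' s h0.le hss), h0⟩
end

section
/- For every measurable f, g on a measure space (R, μ), ∫_R |f g| dμ ≤ ∫₀^∞ f*(t) g*(t) dt (Hardy–Littlewood inequality), where * denotes the decreasing rearrangement. -/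
open MeasureTheory ENNReal

/-- The decreasing rearrangement of `f` with respect to `μ`, as a function of a real
variable `t` (interpreted for `t ≥ 0`). -/
noncomputable def rearrR {α : Type*} [MeasurableSpace α] (μ : Measure α)
    (f : α → ℝ) (t : ℝ) : ℝ≥0∞ :=
  sInf {s : ℝ≥0∞ | μ {x | s < (‖f x‖₊ : ℝ≥0∞)} ≤ ENNReal.ofReal t}

namespace HLaux

open Set

lemma layerA (a : ℝ≥0∞) : (volume : Measure ℝ) {t : ℝ | 0 < t ∧ ENNReal.ofReal t < a} = a := by
  rcases eq_or_ne a ⊤ with rfl | ha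
  · have h : {t : ℝ | 0 < t ∧ ENNReal.ofReal t < ⊤} = Ioi 0 := by
      ext t; simp [ofReal_lt_top]
    rw [h]; simp [Real.volume_Ioi]
  · have h : {t : ℝ | 0 < t ∧ ENNReal.ofReal t < a} = Ioo 0 a.toReal := by
      ext t
      constructor
      · rintro ⟨ht, hlt⟩
        exact ⟨ht, (ENNReal.ofReal_lt_iff_lt_toReal ht.le ha).mp hlt⟩
      · rintro ⟨ht, hlt⟩
        exact ⟨ht, (ENNReal.ofReal_lt_iff_lt_toReal ht.le ha).mpr hlt⟩
    rw [h, Real.volume_Ioo, sub_zero, ENNReal.ofReal_toReal ha]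

lemma single_layer {α : Type*} [MeasurableSpace α] (ν : Measure α) [SFinite ν]
    {G : α → ℝ≥0∞} (hG : Measurable G) :
    ∫⁻ x, G x ∂ν = ∫⁻ s in Ioi (0 : ℝ), ν {x | ENNReal.ofReal s < G x} := by
  set S : Set (α × ℝ) := {p : α × ℝ | ENNReal.ofReal p.2 < G p.1} with hSdef
  have hS : MeasurableSet S :=
    measurableSet_lt (ENNReal.measurable_ofReal.comp measurable_snd) (hG.comp measurable_fst)
  have key1 : ∀ x, ∫⁻ s in Ioi (0 : ℝ), S.indicator (1 : α × ℝ → ℝ≥0∞) (x, s) = G x := by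
    intro x
    have h1 : (fun s : ℝ => S.indicator (1 : α × ℝ → ℝ≥0∞) (x, s)) =
        ({s : ℝ | ENNReal.ofReal s < G x}).indicator (1 : ℝ → ℝ≥0∞) := by
      funext s
      by_cases h : ENNReal.ofReal s < G x <;>
        simp [Set.indicator_apply, hSdef, h]
    rw [h1, lintegral_indicator_one (show MeasurableSet {s : ℝ | ENNReal.ofReal s < G x} from ENNReal.measurable_ofReal measurableSet_Iio),
      Measure.restrict_apply' measurableSet_Ioi]
    have h2 : {s : ℝ | ENNReal.ofReal s < G x} ∩ Ioi 0 =
        {t : ℝ | 0 < t ∧ ENNReal.ofReal t < G x} := by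
      ext t; simp [Set.mem_setOf_eq, and_comm]
    rw [h2, layerA]
  have key2 : ∀ s : ℝ, ∫⁻ x, S.indicator (1 : α × ℝ → ℝ≥0∞) (x, s) ∂ν
      = ν {x | ENNReal.ofReal s < G x} := by
    intro s
    have h1 : (fun x : α => S.indicator (1 : α × ℝ → ℝ≥0∞) (x, s)) =
        ({x : α | ENNReal.ofReal s < G x}).indicator (1 : α → ℝ≥0∞) := by
      funext x
      by_cases h : ENNReal.ofReal s < G x <;>
        simp [Set.indicator_apply, hSdef, h]
    rw [h1, lintegral_indicator_one (show MeasurableSet {x : α | ENNReal.ofReal s < G x} from hG measurableSet_Ioi)]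
  have hsw : AEMeasurable
      (Function.uncurry fun (x : α) (s : ℝ) => S.indicator (1 : α × ℝ → ℝ≥0∞) (x, s))
      (ν.prod (volume.restrict (Ioi (0 : ℝ)))) :=
    (measurable_one.indicator hS).aemeasurable
  calc ∫⁻ x, G x ∂ν
      = ∫⁻ x, (∫⁻ s in Ioi (0 : ℝ), S.indicator (1 : α × ℝ → ℝ≥0∞) (x, s)) ∂ν := by
        refine lintegral_congr fun x => (key1 x).symm
    _ = ∫⁻ s in Ioi (0 : ℝ), (∫⁻ x, S.indicator (1 : α × ℝ → ℝ≥0∞) (x, s) ∂ν) :=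
        lintegral_lintegral_swap hsw
    _ = ∫⁻ s in Ioi (0 : ℝ), ν {x | ENNReal.ofReal s < G x} :=
        lintegral_congr fun s => key2 s

lemma double_layer {α : Type*} [MeasurableSpace α] (ν : Measure α) [SFinite ν]
    {F G : α → ℝ≥0∞} (hF : Measurable F) (hG : Measurable G) :
    ∫⁻ x, F x * G x ∂ν =
      ∫⁻ s in Ioi (0 : ℝ), ∫⁻ r in Ioi (0 : ℝ),
        ν ({x | ENNReal.ofReal r < G x} ∩ {x | ENNReal.ofReal s < F x}) := by
  have h1 : ∫⁻ x, F x * G x ∂ν = ∫⁻ x, F x ∂(ν.withDensity G) := by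
    rw [lintegral_withDensity_eq_lintegral_mul ν hG hF]
    exact lintegral_congr fun x => mul_comm (F x) (G x)
  rw [h1, single_layer (ν.withDensity G) hF]
  refine lintegral_congr fun s => ?_
  have hA : MeasurableSet {x | ENNReal.ofReal s < F x} := hF measurableSet_Ioi
  rw [withDensity_apply G hA]
  rw [show ∫⁻ a in {x | ENNReal.ofReal s < F x}, G a ∂ν
      = ∫⁻ a, G a ∂(ν.restrict {x | ENNReal.ofReal s < F x}) from rfl]
  rw [single_layer (ν.restrict {x | ENNReal.ofReal s < F x}) hG]
  exact lintegral_congr fun r => Measure.restrict_apply' hA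

lemma rearr_lt_iff {α : Type*} [MeasurableSpace α] (μ : Measure α) (f : α → ℝ) (t : ℝ)
    (s : ℝ≥0∞) :
    s < rearrR μ f t ↔ ENNReal.ofReal t < μ {x | s < (‖f x‖₊ : ℝ≥0∞)} := by
  constructor
  · intro h
    by_contra hc
    push_neg at hc
    have hmem : s ∈ {u : ℝ≥0∞ | μ {x | u < (‖f x‖₊ : ℝ≥0∞)} ≤ ENNReal.ofReal t} := hc
    exact absurd (sInf_le hmem : rearrR μ f t ≤ s) (not_le.mpr h)
  · intro h
    have hs : s ≠ ⊤ := by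
      rintro rfl
      rw [show {x | (⊤ : ℝ≥0∞) < (‖f x‖₊ : ℝ≥0∞)} = ∅ by ext x; simp] at h
      simp at h
    have hU : {x | s < (‖f x‖₊ : ℝ≥0∞)} =
        ⋃ n : ℕ, {x | s + ((n : ℝ≥0∞))⁻¹ < (‖f x‖₊ : ℝ≥0∞)} := by
      ext x
      simp only [Set.mem_setOf_eq, Set.mem_iUnion]
      constructor
      · intro hx
        obtain ⟨r, hr0, hr⟩ := ENNReal.lt_iff_exists_add_pos_lt.mp hx
        obtain ⟨n, hn⟩ := ENNReal.exists_inv_nat_lt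
          (a := (r : ℝ≥0∞)) (by exact_mod_cast hr0.ne')
        exact ⟨n, lt_of_le_of_lt (add_le_add le_rfl hn.le) hr⟩
      · rintro ⟨n, hn⟩
        exact lt_of_le_of_lt (le_add_right le_rfl) hn
    have hdir : Directed (· ⊆ ·)
        (fun n : ℕ => {x | s + ((n : ℝ≥0∞))⁻¹ < (‖f x‖₊ : ℝ≥0∞)}) := by
      apply Monotone.directed_le
      intro m n hmn x hx
      refine (lt_of_le_of_lt (add_le_add le_rfl ?_) (hx : s + ((m : ℝ≥0∞))⁻¹ < _) : s + ((n : ℝ≥0∞))⁻¹ < _)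
      exact ENNReal.inv_le_inv.mpr (by exact_mod_cast hmn)
    rw [hU, hdir.measure_iUnion] at h
    obtain ⟨n, hn⟩ := lt_iSup_iff.mp h
    have hlt : s < s + ((n : ℝ≥0∞))⁻¹ :=
      ENNReal.lt_add_right hs (ENNReal.inv_ne_zero.mpr (ENNReal.natCast_ne_top n))
    refine lt_of_lt_of_le hlt (le_sInf ?_ : _ ≤ rearrR μ f t)
    intro u hu
    by_contra hc
    push_neg at hc
    have hmono : μ {x | s + ((n : ℝ≥0∞))⁻¹ < (‖f x‖₊ : ℝ≥0∞)} ≤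
        μ {x | u < (‖f x‖₊ : ℝ≥0∞)} :=
      measure_mono fun x hx => lt_of_lt_of_le hc hx.le |>.trans_le le_rfl
    exact absurd (hmono.trans hu) (not_le.mpr hn)

lemma rearr_anti {α : Type*} [MeasurableSpace α] (μ : Measure α) (f : α → ℝ) :
    Antitone (rearrR μ f) := by
  intro t t' h
  exact sInf_le_sInf fun u hu => le_trans hu (ENNReal.ofReal_le_ofReal h)

end HLaux

/-- The Hardy–Littlewood inequality: `∫ |f g| dμ ≤ ∫₀^∞ f*(t) g*(t) dt`. -/
theorem hardy_littlewood_inequality {α : Type*} [MeasurableSpace α]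
    (μ : Measure α) [SigmaFinite μ] (f g : α → ℝ)
    (hf : Measurable f) (hg : Measurable g) :
    ∫⁻ x, (‖f x‖₊ : ℝ≥0∞) * (‖g x‖₊ : ℝ≥0∞) ∂μ ≤
      ∫⁻ t in Set.Ioi (0 : ℝ), rearrR μ f t * rearrR μ g t := by
  have hF : Measurable fun x => (‖f x‖₊ : ℝ≥0∞) := hf.nnnorm.coe_nnreal_ennreal
  have hG : Measurable fun x => (‖g x‖₊ : ℝ≥0∞) := hg.nnnorm.coe_nnreal_ennreal
  have hFr : Measurable (rearrR μ f) := (HLaux.rearr_anti μ f).measurable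
  have hGr : Measurable (rearrR μ g) := (HLaux.rearr_anti μ g).measurable
  rw [HLaux.double_layer μ hF hG]
  rw [show ∫⁻ t in Set.Ioi (0 : ℝ), rearrR μ f t * rearrR μ g t
      = ∫⁻ t, rearrR μ f t * rearrR μ g t ∂(volume.restrict (Set.Ioi (0 : ℝ))) from rfl,
    HLaux.double_layer (volume.restrict (Set.Ioi (0 : ℝ))) hFr hGr]
  refine lintegral_mono fun s => lintegral_mono fun r => ?_
  have hmin : (volume.restrict (Set.Ioi (0 : ℝ)))
      ({t | ENNReal.ofReal r < rearrR μ g t} ∩ {t | ENNReal.ofReal s < rearrR μ f t})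
      = min (μ {x | ENNReal.ofReal r < (‖g x‖₊ : ℝ≥0∞)})
          (μ {x | ENNReal.ofReal s < (‖f x‖₊ : ℝ≥0∞)}) := by
    rw [Measure.restrict_apply' measurableSet_Ioi]
    have h : ({t | ENNReal.ofReal r < rearrR μ g t} ∩ {t | ENNReal.ofReal s < rearrR μ f t})
        ∩ Set.Ioi 0
        = {t : ℝ | 0 < t ∧ ENNReal.ofReal t <
            min (μ {x | ENNReal.ofReal r < (‖g x‖₊ : ℝ≥0∞)})
              (μ {x | ENNReal.ofReal s < (‖f x‖₊ : ℝ≥0∞)})} := by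
      ext t
      simp only [Set.mem_inter_iff, Set.mem_setOf_eq, Set.mem_Ioi, lt_min_iff]
      rw [HLaux.rearr_lt_iff, HLaux.rearr_lt_iff]
      tauto
    rw [h, HLaux.layerA]
  rw [hmin]
  exact le_min (measure_mono Set.inter_subset_left) (measure_mono Set.inter_subset_right)
end

section
/- Let φ : R → R be power-measure-bounded: for some A > 0 and all n ≥ 1, μ(φ⁻ⁿ(E)) ≤ A μ(E) for every measurable E. Set B = min{1, A⁻¹}. Then for every measurable f, every n ≥ 1, and every t > 0, ∫₀ᵗ ((1/n) Σ_{i=0}^{n-1} f∘φⁱ)*(s) ds ≤ ∫₀ᵗ f*(B s) ds, i.e., the Cesàro means of T_φ are majorized by the dilated rearrangement in the Hardy–Littlewood–Pólya order. -/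
open MeasureTheory ENNReal

open Set

noncomputable def distrR {α : Type*} [MeasurableSpace α] (μ : Measure α)
    (f : α → ℝ) (u : ℝ) : ℝ≥0∞ :=
  μ {x | ENNReal.ofReal u < (‖f x‖₊ : ℝ≥0∞)}

section Aux
variable {α : Type*} [MeasurableSpace α] {μ : Measure α} {f : α → ℝ}

lemma vol_lt_eq (a : ℝ≥0∞) : volume {u : ℝ | 0 < u ∧ ENNReal.ofReal u < a} = a := by
  by_cases ha : a = ⊤
  · subst ha
    have : {u : ℝ | 0 < u ∧ ENNReal.ofReal u < ⊤} = Ioi 0 := by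
      ext u; simp [ENNReal.ofReal_lt_top]
    rw [this, Real.volume_Ioi]
  · have : {u : ℝ | 0 < u ∧ ENNReal.ofReal u < a} = Ioo 0 a.toReal := by
      ext u
      simp only [mem_setOf_eq, mem_Ioo]
      exact and_congr_right fun hu => ENNReal.ofReal_lt_iff_lt_toReal hu.le ha
    rw [this, Real.volume_Ioo, sub_zero, ENNReal.ofReal_toReal ha]

lemma vol_le_eq (a : ℝ≥0∞) : volume {u : ℝ | 0 < u ∧ ENNReal.ofReal u ≤ a} = a := by
  by_cases ha : a = ⊤
  · subst ha
    have : {u : ℝ | 0 < u ∧ ENNReal.ofReal u ≤ ⊤} = Ioi 0 := by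
      ext u; simp
    rw [this, Real.volume_Ioi]
  · have : {u : ℝ | 0 < u ∧ ENNReal.ofReal u ≤ a} = Ioc 0 a.toReal := by
      ext u
      simp only [mem_setOf_eq, mem_Ioc]
      exact and_congr_right fun _ => ENNReal.ofReal_le_iff_le_toReal ha
    rw [this, Real.volume_Ioc, sub_zero, ENNReal.ofReal_toReal ha]

lemma distrR_anti : Antitone (distrR μ f) := by
  intro u v huv
  exact measure_mono fun x hx => lt_of_le_of_lt (ENNReal.ofReal_le_ofReal huv) hx

lemma rearrR_anti : Antitone (rearrR μ f) := by
  intro s s' hss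
  exact sInf_le_sInf fun m hm => le_trans hm (ENNReal.ofReal_le_ofReal hss)

lemma lt_distrR_of_lt_rearrR {u s : ℝ} (h : ENNReal.ofReal u < rearrR μ f s) :
    ENNReal.ofReal s < distrR μ f u := by
  by_contra hc
  have hmem : ENNReal.ofReal u ∈ {m : ℝ≥0∞ | μ {x | m < (‖f x‖₊ : ℝ≥0∞)} ≤ ENNReal.ofReal s} :=
    not_lt.mp hc
  exact absurd (sInf_le hmem) (not_le.mpr h)

lemma le_rearrR_of_distrR_gt {u s : ℝ} (h : ENNReal.ofReal s < distrR μ f u) :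
    ENNReal.ofReal u ≤ rearrR μ f s := by
  refine le_sInf fun m hm => ?_
  by_contra hc
  have hsub : {x | ENNReal.ofReal u < (‖f x‖₊ : ℝ≥0∞)} ⊆ {x | m < (‖f x‖₊ : ℝ≥0∞)} :=
    fun x hx => lt_trans (not_le.mp hc) hx
  exact absurd (le_trans (measure_mono hsub) hm) (not_le.mpr h)

end Aux

section Aux2
variable {α : Type*} [MeasurableSpace α] {μ : Measure α}

lemma distrR_tail {h : α → ℝ} (hm : Measurable h) {l : ℝ} (hl : 0 ≤ l) :
    ∫⁻ u in Ioi l, distrR μ h u = ∫⁻ x, ENNReal.ofReal (max (|h x| - l) 0) ∂μ := by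
  have hpre : (fun u : ℝ => u + l) ⁻¹' Ioi l = Ioi 0 := by ext u; simp
  have h1 : ∫⁻ u in Ioi l, distrR μ h u = ∫⁻ u in Ioi 0, distrR μ h (u + l) := by
    rw [← hpre]
    exact ((measurePreserving_add_right volume l).setLIntegral_comp_preimage
      measurableSet_Ioi distrR_anti.measurable).symm
  rw [h1]
  have h2 : ∀ u ∈ Ioi (0:ℝ), distrR μ h (u + l) = μ {x | u < max (|h x| - l) 0} := by
    intro u hu
    have hu' : (0:ℝ) < u := hu
    unfold distrR
    congr 1
    ext x
    simp only [mem_setOf_eq, ← enorm_eq_nnnorm, Real.enorm_eq_ofReal_abs]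
    rw [ENNReal.ofReal_lt_ofReal_iff_of_nonneg (by positivity), lt_max_iff]
    constructor
    · intro hx; left; linarith
    · rintro (h' | h') <;> linarith
  rw [setLIntegral_congr_fun measurableSet_Ioi h2]
  exact (lintegral_eq_lintegral_meas_lt μ (Filter.Eventually.of_forall fun x => le_max_right _ _)
    ((hm.abs.sub measurable_const).max measurable_const).aemeasurable).symm

end Aux2

section Aux3
variable {α : Type*} [MeasurableSpace α] {μ : Measure α}

lemma cesaro_tail_le {φ : α → α} (hφ : Measurable φ) {A : ℝ}
    (hbound : ∀ n : ℕ, 1 ≤ n → ∀ E : Set α, MeasurableSet E →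
      μ ((φ^[n]) ⁻¹' E) ≤ ENNReal.ofReal A * μ E)
    {f : α → ℝ} (hf : Measurable f) {n : ℕ} (hn : 1 ≤ n) {l : ℝ} (hl : 0 ≤ l) :
    ∫⁻ u in Ioi l, distrR μ (fun x => (1/(n:ℝ)) * ∑ i ∈ Finset.range n, f (φ^[i] x)) u
      ≤ ENNReal.ofReal (max 1 A) * ∫⁻ u in Ioi l, distrR μ f u := by
  have hgm : Measurable (fun x => (1/(n:ℝ)) * ∑ i ∈ Finset.range n, f (φ^[i] x)) :=
    measurable_const.mul (Finset.measurable_sum _ fun i _ => hf.comp (hφ.iterate i))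
  rw [distrR_tail hgm hl, distrR_tail hf hl]
  set G : α → ℝ≥0∞ := fun y => ENNReal.ofReal (max (|f y| - l) 0) with hG
  have hGm : Measurable G :=
    ENNReal.measurable_ofReal.comp ((hf.abs.sub measurable_const).max measurable_const)
  have hn0 : (0:ℝ) < n := by exact_mod_cast hn
  have hpt : ∀ x, ENNReal.ofReal (max (|(1/(n:ℝ)) * ∑ i ∈ Finset.range n, f (φ^[i] x)| - l) 0)
      ≤ (n:ℝ≥0∞)⁻¹ * ∑ i ∈ Finset.range n, G (φ^[i] x) := by
    intro x
    have h1 : |(1/(n:ℝ)) * ∑ i ∈ Finset.range n, f (φ^[i] x)|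
        ≤ (1/(n:ℝ)) * ∑ i ∈ Finset.range n, |f (φ^[i] x)| := by
      rw [abs_mul, abs_of_nonneg (by positivity : (0:ℝ) ≤ 1/(n:ℝ))]
      exact mul_le_mul_of_nonneg_left (Finset.abs_sum_le_sum_abs _ _) (by positivity)
    have h2 : max (|(1/(n:ℝ)) * ∑ i ∈ Finset.range n, f (φ^[i] x)| - l) 0
        ≤ (1/(n:ℝ)) * ∑ i ∈ Finset.range n, max (|f (φ^[i] x)| - l) 0 := by
      rcases le_or_gt (|(1/(n:ℝ)) * ∑ i ∈ Finset.range n, f (φ^[i] x)| - l) 0 with hc | hc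
      · rw [max_eq_right hc]; positivity
      · rw [max_eq_left hc.le]
        have hb : (1/(n:ℝ)) * ∑ i ∈ Finset.range n, (|f (φ^[i] x)| - l)
            ≤ (1/(n:ℝ)) * ∑ i ∈ Finset.range n, max (|f (φ^[i] x)| - l) 0 :=
          mul_le_mul_of_nonneg_left (Finset.sum_le_sum fun i _ => le_max_left _ _)
            (by positivity)
        refine le_trans ?_ hb
        rw [Finset.sum_sub_distrib, Finset.sum_const, Finset.card_range, mul_sub,
          nsmul_eq_mul]
        have : (1/(n:ℝ)) * ((n:ℝ) * l) = l := by field_simp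
        rw [this]
        linarith [h1]
    calc ENNReal.ofReal (max (|(1/(n:ℝ)) * ∑ i ∈ Finset.range n, f (φ^[i] x)| - l) 0)
        ≤ ENNReal.ofReal ((1/(n:ℝ)) * ∑ i ∈ Finset.range n, max (|f (φ^[i] x)| - l) 0) :=
          ENNReal.ofReal_le_ofReal h2
      _ = ENNReal.ofReal (1/(n:ℝ)) * ∑ i ∈ Finset.range n, G (φ^[i] x) := by
          rw [ENNReal.ofReal_mul (by positivity),
            ENNReal.ofReal_sum_of_nonneg (fun i _ => le_max_right _ _)]
      _ = (n:ℝ≥0∞)⁻¹ * ∑ i ∈ Finset.range n, G (φ^[i] x) := by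
          rw [one_div, ENNReal.ofReal_inv_of_pos hn0, ENNReal.ofReal_natCast]
  calc ∫⁻ x, ENNReal.ofReal (max (|(1/(n:ℝ)) * ∑ i ∈ Finset.range n, f (φ^[i] x)| - l) 0) ∂μ
      ≤ ∫⁻ x, (n:ℝ≥0∞)⁻¹ * ∑ i ∈ Finset.range n, G (φ^[i] x) ∂μ := lintegral_mono hpt
    _ = (n:ℝ≥0∞)⁻¹ * ∑ i ∈ Finset.range n, ∫⁻ x, G (φ^[i] x) ∂μ := by
        have hGi : ∀ i, Measurable fun x => G (φ^[i] x) := fun i => hGm.comp (hφ.iterate i)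
        rw [lintegral_const_mul _ (Finset.measurable_sum _ fun i _ => hGi i)]
        congr 1
        exact lintegral_finset_sum _ (fun i _ => hGi i)
    _ ≤ (n:ℝ≥0∞)⁻¹ * ∑ _i ∈ Finset.range n, (ENNReal.ofReal (max 1 A) * ∫⁻ x, G x ∂μ) := by
        gcongr with i _hi
        have hmap : μ.map (φ^[i]) ≤ ENNReal.ofReal (max 1 A) • μ := by
          refine Measure.le_iff.mpr fun s hs => ?_
          rw [Measure.map_apply (hφ.iterate i) hs, Measure.smul_apply, smul_eq_mul]
          rcases Nat.eq_zero_or_pos i with h0 | h0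
          · subst h0
            simp only [Function.iterate_zero, Set.preimage_id']
            exact le_mul_of_one_le_left zero_le
              (ENNReal.one_le_ofReal.mpr (le_max_left 1 A))
          · exact le_trans (hbound i h0 s hs)
              (mul_le_mul_left (ENNReal.ofReal_le_ofReal (le_max_right 1 A)) _)
        calc ∫⁻ x, G (φ^[i] x) ∂μ = ∫⁻ y, G y ∂(μ.map (φ^[i])) :=
              (lintegral_map hGm (hφ.iterate i)).symm
          _ ≤ ∫⁻ y, G y ∂(ENNReal.ofReal (max 1 A) • μ) := lintegral_mono' hmap le_rfl
          _ = ENNReal.ofReal (max 1 A) * ∫⁻ y, G y ∂μ := lintegral_smul_measure _ _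
    _ = ENNReal.ofReal (max 1 A) * ∫⁻ x, G x ∂μ := by
        rw [Finset.sum_const, Finset.card_range, nsmul_eq_mul, ← mul_assoc, ← mul_assoc,
          ENNReal.inv_mul_cancel (by exact_mod_cast (by omega : n ≠ 0))
            (ENNReal.natCast_ne_top n), one_mul]

end Aux3

section Aux4
variable {α : Type*} [MeasurableSpace α] {μ : Measure α}

lemma lhs_le (g : α → ℝ) {t : ℝ} (_ht : 0 < t) :
    ∫⁻ s in Ioc 0 t, rearrR μ g s
      ≤ ∫⁻ u in Ioi 0, min (ENNReal.ofReal t) (distrR μ g u) := by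
  set P : Set (ℝ × ℝ) := {p | 0 < p.2 ∧ ENNReal.ofReal p.2 < rearrR μ g p.1} with hP
  have hPm : MeasurableSet P := by
    have : P = (Prod.snd ⁻¹' Ioi (0:ℝ)) ∩
        {p : ℝ × ℝ | ENNReal.ofReal p.2 < rearrR μ g p.1} := rfl
    rw [this]
    exact (measurable_snd measurableSet_Ioi).inter
      (measurableSet_lt (ENNReal.measurable_ofReal.comp measurable_snd)
        (rearrR_anti.measurable.comp measurable_fst))
  have step1 : ∫⁻ s in Ioc 0 t, rearrR μ g s
      = ∫⁻ s in Ioc 0 t, ∫⁻ u, P.indicator 1 (s, u) := by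
    refine lintegral_congr fun s => ?_
    have hse : (fun u => P.indicator (1 : ℝ × ℝ → ℝ≥0∞) (s, u))
        = (Ioi (0:ℝ) ∩ {u : ℝ | ENNReal.ofReal u < rearrR μ g s}).indicator (1 : ℝ → ℝ≥0∞) := by
      ext u
      simp only [hP, Set.indicator_apply, mem_setOf_eq, mem_inter_iff, mem_Ioi, Pi.one_apply]
    rw [hse, lintegral_indicator_one
      (measurableSet_Ioi.inter (measurableSet_lt ENNReal.measurable_ofReal measurable_const))]
    have : Ioi (0:ℝ) ∩ {u : ℝ | ENNReal.ofReal u < rearrR μ g s}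
        = {u : ℝ | 0 < u ∧ ENNReal.ofReal u < rearrR μ g s} := rfl
    rw [this, vol_lt_eq]
  have step2 : ∫⁻ s in Ioc 0 t, ∫⁻ u, P.indicator 1 (s, u)
      = ∫⁻ u, ∫⁻ s in Ioc 0 t, P.indicator 1 (s, u) :=
    lintegral_lintegral_swap ((measurable_one.indicator hPm).aemeasurable)
  have step3 : ∀ u : ℝ, (∫⁻ s in Ioc 0 t, P.indicator 1 (s, u))
      ≤ (Ioi (0:ℝ)).indicator (fun u => min (ENNReal.ofReal t) (distrR μ g u)) u := by
    intro u
    have hse : (fun s => P.indicator (1 : ℝ × ℝ → ℝ≥0∞) (s, u))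
        = ({s : ℝ | 0 < u} ∩ {s : ℝ | ENNReal.ofReal u < rearrR μ g s}).indicator (1 : ℝ → ℝ≥0∞) := by
      ext s
      simp only [hP, Set.indicator_apply, mem_setOf_eq, mem_inter_iff, Pi.one_apply]
    have hsm' : MeasurableSet ({s : ℝ | 0 < u} ∩ {s : ℝ | ENNReal.ofReal u < rearrR μ g s}) :=
      (MeasurableSet.const _).inter (measurableSet_lt measurable_const rearrR_anti.measurable)
    rw [hse, lintegral_indicator_one hsm']
    by_cases hu : 0 < u
    · rw [indicator_of_mem (mem_Ioi.mpr hu)]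
      refine le_min ?_ ?_
      · rw [Measure.restrict_apply hsm']
        refine le_trans (measure_mono inter_subset_right) ?_
        rw [Real.volume_Ioc, sub_zero]
      · rw [Measure.restrict_apply hsm']
        refine le_trans (measure_mono ?_) (le_of_eq (vol_lt_eq (distrR μ g u)))
        rintro s ⟨⟨_, hs2⟩, hs3, _⟩
        exact ⟨hs3, lt_distrR_of_lt_rearrR hs2⟩
    · have hempty : ({s : ℝ | 0 < u} ∩ {s : ℝ | ENNReal.ofReal u < rearrR μ g s}) = ∅ := by
        ext s; simp [hu]
      rw [hempty]
      simp
  calc ∫⁻ s in Ioc 0 t, rearrR μ g s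
      = ∫⁻ u, ∫⁻ s in Ioc 0 t, P.indicator 1 (s, u) := by rw [step1, step2]
    _ ≤ ∫⁻ u, (Ioi (0:ℝ)).indicator (fun u => min (ENNReal.ofReal t) (distrR μ g u)) u :=
        lintegral_mono step3
    _ = ∫⁻ u in Ioi 0, min (ENNReal.ofReal t) (distrR μ g u) :=
        lintegral_indicator measurableSet_Ioi _

end Aux4

section Aux5
variable {α : Type*} [MeasurableSpace α] {μ : Measure α}

lemma inv_min_eq {A : ℝ} (hA : 0 < A) : (min 1 A⁻¹)⁻¹ = max 1 A := by
  rcases le_total A 1 with h | h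
  · have h1 : (1:ℝ) ≤ A⁻¹ := by nlinarith [mul_inv_cancel₀ hA.ne']
    rw [min_eq_left h1, inv_one, max_eq_left h]
  · have h1 : A⁻¹ ≤ 1 := by nlinarith [mul_inv_cancel₀ hA.ne']
    rw [min_eq_right h1, inv_inv, max_eq_right h]

lemma ofReal_min' (a b : ℝ) : min (ENNReal.ofReal a) (ENNReal.ofReal b)
    = ENNReal.ofReal (min a b) := by
  rcases le_total a b with h | h
  · rw [min_eq_left (ENNReal.ofReal_le_ofReal h), min_eq_left h]
  · rw [min_eq_right (ENNReal.ofReal_le_ofReal h), min_eq_right h]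

lemma rhs_ge (f : α → ℝ) {A t : ℝ} (hA0 : 0 < A) (ht : 0 < t) :
    ∫⁻ u in Ioi 0, min (ENNReal.ofReal t) (ENNReal.ofReal (max 1 A) * distrR μ f u)
      ≤ ∫⁻ s in Ioc 0 t, rearrR μ f (min 1 A⁻¹ * s) := by
  set B : ℝ := min 1 A⁻¹ with hBdef
  have hB : 0 < B := lt_min zero_lt_one (inv_pos.mpr hA0)
  have hA'pos : (0:ℝ) < max 1 A := lt_max_of_lt_left zero_lt_one
  set Q : Set (ℝ × ℝ) := {p | 0 < p.2 ∧ ENNReal.ofReal (B * p.1) < distrR μ f p.2} with hQ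
  have hQm : MeasurableSet Q := by
    have : Q = (Prod.snd ⁻¹' Ioi (0:ℝ)) ∩
        {p : ℝ × ℝ | ENNReal.ofReal (B * p.1) < distrR μ f p.2} := rfl
    rw [this]
    exact (measurable_snd measurableSet_Ioi).inter
      (measurableSet_lt (ENNReal.measurable_ofReal.comp (measurable_fst.const_mul B))
        (distrR_anti.measurable.comp measurable_snd))
  have step1 : ∀ u : ℝ,
      (Ioi (0:ℝ)).indicator
        (fun u => min (ENNReal.ofReal t) (ENNReal.ofReal (max 1 A) * distrR μ f u)) u
      ≤ ∫⁻ s in Ioc 0 t, Q.indicator (1 : ℝ × ℝ → ℝ≥0∞) (s, u) := by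
    intro u
    by_cases hu : 0 < u
    · rw [indicator_of_mem (mem_Ioi.mpr hu)]
      have hse : (fun s => Q.indicator (1 : ℝ × ℝ → ℝ≥0∞) (s, u))
          = ({s : ℝ | 0 < u} ∩ {s : ℝ | ENNReal.ofReal (B * s) < distrR μ f u}).indicator
            (1 : ℝ → ℝ≥0∞) := by
        ext s
        simp only [hQ, Set.indicator_apply, mem_setOf_eq, mem_inter_iff, Pi.one_apply]
      have hsm : MeasurableSet
          ({s : ℝ | 0 < u} ∩ {s : ℝ | ENNReal.ofReal (B * s) < distrR μ f u}) :=
        (MeasurableSet.const _).inter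
          (measurableSet_lt (ENNReal.measurable_ofReal.comp (measurable_id.const_mul B))
            measurable_const)
      rw [hse, lintegral_indicator_one hsm, Measure.restrict_apply hsm]
      set d : ℝ≥0∞ := distrR μ f u with hd
      by_cases hdt : d = ⊤
      · have h1 : ENNReal.ofReal (max 1 A) * d = ⊤ := by
          rw [hdt]
          exact ENNReal.mul_top (ENNReal.ofReal_pos.mpr hA'pos).ne'
        rw [h1, min_eq_left le_top]
        have hsub : Ioc (0:ℝ) t ⊆
            ({s : ℝ | 0 < u} ∩ {s : ℝ | ENNReal.ofReal (B * s) < d}) ∩ Ioc 0 t := by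
          intro s hs
          exact ⟨⟨hu, by rw [hdt]; exact ENNReal.ofReal_lt_top⟩, hs⟩
        calc ENNReal.ofReal t = volume (Ioc (0:ℝ) t) := by rw [Real.volume_Ioc, sub_zero]
          _ ≤ _ := measure_mono hsub
      · have hsub : Ioo (0:ℝ) (min t (d.toReal / B)) ⊆
            ({s : ℝ | 0 < u} ∩ {s : ℝ | ENNReal.ofReal (B * s) < d}) ∩ Ioc 0 t := by
          rintro s ⟨hs0, hs1⟩
          have hst : s < t := lt_of_lt_of_le hs1 (min_le_left _ _)
          have hsd : s < d.toReal / B := lt_of_lt_of_le hs1 (min_le_right _ _)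
          refine ⟨⟨hu, ?_⟩, hs0, hst.le⟩
          show ENNReal.ofReal (B * s) < d
          rw [ENNReal.ofReal_lt_iff_lt_toReal (by positivity) hdt]
          calc B * s < B * (d.toReal / B) := by
                exact (mul_lt_mul_iff_right₀ hB).mpr hsd
            _ = d.toReal := by field_simp
        have hvol : ENNReal.ofReal (min t (d.toReal / B))
            ≤ volume (({s : ℝ | 0 < u} ∩ {s : ℝ | ENNReal.ofReal (B * s) < d}) ∩ Ioc 0 t) := by
          refine le_trans (le_of_eq ?_) (measure_mono hsub)
          rw [Real.volume_Ioo, sub_zero]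
        refine le_trans (le_of_eq ?_) hvol
        have h2 : ENNReal.ofReal (max 1 A) * d = ENNReal.ofReal (d.toReal / B) := by
          conv_lhs => rw [← ENNReal.ofReal_toReal hdt]
          rw [← ENNReal.ofReal_mul (le_of_lt hA'pos)]
          congr 1
          rw [div_eq_mul_inv, inv_min_eq hA0, mul_comm]
        rw [h2, ofReal_min']
    · rw [indicator_of_notMem (by simpa using hu)]
      exact zero_le
  have step2 : ∫⁻ u, ∫⁻ s in Ioc 0 t, Q.indicator (1 : ℝ × ℝ → ℝ≥0∞) (s, u)
      = ∫⁻ s in Ioc 0 t, ∫⁻ u, Q.indicator (1 : ℝ × ℝ → ℝ≥0∞) (s, u) :=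
    lintegral_lintegral_swap (((measurable_one.indicator hQm).comp measurable_swap).aemeasurable)
  have step3 : ∀ s : ℝ, (∫⁻ u, Q.indicator (1 : ℝ × ℝ → ℝ≥0∞) (s, u))
      ≤ rearrR μ f (B * s) := by
    intro s
    have hse : (fun u => Q.indicator (1 : ℝ × ℝ → ℝ≥0∞) (s, u))
        = (Ioi (0:ℝ) ∩ {u : ℝ | ENNReal.ofReal (B * s) < distrR μ f u}).indicator
          (1 : ℝ → ℝ≥0∞) := by
      ext u
      simp only [hQ, Set.indicator_apply, mem_setOf_eq, mem_inter_iff, mem_Ioi, Pi.one_apply]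
    have hsm : MeasurableSet (Ioi (0:ℝ) ∩ {u : ℝ | ENNReal.ofReal (B * s) < distrR μ f u}) :=
      measurableSet_Ioi.inter (measurableSet_lt measurable_const distrR_anti.measurable)
    rw [hse, lintegral_indicator_one hsm]
    calc volume (Ioi (0:ℝ) ∩ {u : ℝ | ENNReal.ofReal (B * s) < distrR μ f u})
        ≤ volume {u : ℝ | 0 < u ∧ ENNReal.ofReal u ≤ rearrR μ f (B * s)} := by
          refine measure_mono ?_
          rintro u ⟨hu0, hu1⟩
          exact ⟨hu0, le_rearrR_of_distrR_gt hu1⟩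
      _ = rearrR μ f (B * s) := vol_le_eq _
  calc ∫⁻ u in Ioi 0, min (ENNReal.ofReal t) (ENNReal.ofReal (max 1 A) * distrR μ f u)
      = ∫⁻ u, (Ioi (0:ℝ)).indicator
          (fun u => min (ENNReal.ofReal t) (ENNReal.ofReal (max 1 A) * distrR μ f u)) u :=
        (lintegral_indicator measurableSet_Ioi _).symm
    _ ≤ ∫⁻ u, ∫⁻ s in Ioc 0 t, Q.indicator (1 : ℝ × ℝ → ℝ≥0∞) (s, u) := lintegral_mono step1
    _ = ∫⁻ s in Ioc 0 t, ∫⁻ u, Q.indicator (1 : ℝ × ℝ → ℝ≥0∞) (s, u) := step2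
    _ ≤ ∫⁻ s in Ioc 0 t, rearrR μ f (B * s) := lintegral_mono step3

end Aux5

section Aux6
variable {α : Type*} [MeasurableSpace α] {μ : Measure α}

lemma middle_le {g f : α → ℝ} {c : ℝ≥0∞} {t : ℝ} (ht : 0 < t)
    (hcomp : ∀ l : ℝ, 0 ≤ l →
      ∫⁻ u in Ioi l, distrR μ g u ≤ c * ∫⁻ u in Ioi l, distrR μ f u) :
    ∫⁻ u in Ioi 0, min (ENNReal.ofReal t) (distrR μ g u)
      ≤ ∫⁻ u in Ioi 0, min (ENNReal.ofReal t) (c * distrR μ f u) := by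
  set S : Set ℝ := {u | 0 < u ∧ c * distrR μ f u ≤ ENNReal.ofReal t} with hS
  by_cases hne : S.Nonempty
  · set l := sInf S with hl
    have hbdd : BddBelow S := ⟨0, fun v hv => hv.1.le⟩
    have hl0 : 0 ≤ l := le_csInf hne fun v hv => hv.1.le
    have h1 : ∀ u : ℝ, l < u → c * distrR μ f u ≤ ENNReal.ofReal t := by
      intro u hu
      obtain ⟨v, hvS, hvu⟩ := (csInf_lt_iff hbdd hne).mp hu
      exact le_trans (mul_le_mul_right (distrR_anti hvu.le) c) hvS.2
    have h2 : ∀ u : ℝ, 0 < u → u < l → ENNReal.ofReal t ≤ c * distrR μ f u := by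
      intro u hu0 hul
      by_contra hc'
      exact absurd (csInf_le hbdd ⟨hu0, (not_le.mp hc').le⟩) (not_le.mpr hul)
    have hmeasmin : Measurable fun u : ℝ => min (ENNReal.ofReal t) (c * distrR μ f u) :=
      measurable_const.min (distrR_anti.measurable.const_mul c)
    have hLHS : ∫⁻ u in Ioi 0, min (ENNReal.ofReal t) (distrR μ g u)
        ≤ ENNReal.ofReal t * ENNReal.ofReal l + c * ∫⁻ u in Ioi l, distrR μ f u := by
      rw [← Ioc_union_Ioi_eq_Ioi hl0, lintegral_union measurableSet_Ioi (Ioc_disjoint_Ioi le_rfl)]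
      refine add_le_add ?_ ?_
      · calc ∫⁻ u in Ioc 0 l, min (ENNReal.ofReal t) (distrR μ g u)
            ≤ ∫⁻ _u in Ioc 0 l, ENNReal.ofReal t := lintegral_mono fun u => min_le_left _ _
          _ = ENNReal.ofReal t * ENNReal.ofReal l := by
              rw [setLIntegral_const, Real.volume_Ioc, sub_zero]
      · calc ∫⁻ u in Ioi l, min (ENNReal.ofReal t) (distrR μ g u)
            ≤ ∫⁻ u in Ioi l, distrR μ g u := lintegral_mono fun u => min_le_right _ _
          _ ≤ c * ∫⁻ u in Ioi l, distrR μ f u := hcomp l hl0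
    have hRHS : ENNReal.ofReal t * ENNReal.ofReal l + c * ∫⁻ u in Ioi l, distrR μ f u
        ≤ ∫⁻ u in Ioi 0, min (ENNReal.ofReal t) (c * distrR μ f u) := by
      have hsub : Ioo 0 l ∪ Ioi l ⊆ Ioi (0:ℝ) :=
        union_subset Ioo_subset_Ioi_self (fun v hv => lt_of_le_of_lt hl0 hv)
      calc ENNReal.ofReal t * ENNReal.ofReal l + c * ∫⁻ u in Ioi l, distrR μ f u
          = (∫⁻ _u in Ioo 0 l, ENNReal.ofReal t)
            + ∫⁻ u in Ioi l, c * distrR μ f u := by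
            rw [setLIntegral_const, Real.volume_Ioo, sub_zero,
              lintegral_const_mul _ distrR_anti.measurable]
        _ ≤ (∫⁻ u in Ioo 0 l, min (ENNReal.ofReal t) (c * distrR μ f u))
            + ∫⁻ u in Ioi l, min (ENNReal.ofReal t) (c * distrR μ f u) := by
            refine add_le_add ?_ ?_
            · refine setLIntegral_mono hmeasmin fun u hu => ?_
              exact le_min le_rfl (h2 u hu.1 hu.2)
            · refine setLIntegral_mono hmeasmin fun u hu => ?_
              exact le_min (h1 u hu) le_rfl
        _ = ∫⁻ u in Ioo 0 l ∪ Ioi l, min (ENNReal.ofReal t) (c * distrR μ f u) :=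
            (lintegral_union measurableSet_Ioi
              ((Ioc_disjoint_Ioi le_rfl).mono_left Ioo_subset_Ioc_self)).symm
        _ ≤ ∫⁻ u in Ioi 0, min (ENNReal.ofReal t) (c * distrR μ f u) :=
            lintegral_mono_set hsub
    exact le_trans hLHS hRHS
  · have hall : ∀ u ∈ Ioi (0:ℝ), min (ENNReal.ofReal t) (c * distrR μ f u)
        = ENNReal.ofReal t := by
      intro u hu
      refine min_eq_left ?_
      by_contra hc'
      exact hne ⟨u, hu, (not_le.mp hc').le⟩
    have hRT : ∫⁻ u in Ioi 0, min (ENNReal.ofReal t) (c * distrR μ f u) = ⊤ := by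
      rw [setLIntegral_congr_fun measurableSet_Ioi hall,
        setLIntegral_const, Real.volume_Ioi, ENNReal.mul_top (ENNReal.ofReal_pos.mpr ht).ne']
    rw [hRT]
    exact le_top

end Aux6

/-- If `φ` is power-measure-bounded with constant `A` and `B = min {1, A⁻¹}`, then the
Cesàro means `(1/n) ∑_{i<n} f ∘ φⁱ` satisfy
`∫₀ᵗ ((1/n) ∑_{i<n} f∘φⁱ)*(s) ds ≤ ∫₀ᵗ f*(B s) ds` for all `n ≥ 1` and `t > 0`,
i.e. they are majorized by the dilated rearrangement in the
Hardy–Littlewood–Pólya order. -/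
theorem cesaro_hlp_majorized {α : Type*} [MeasurableSpace α]
    (μ : Measure α) [SigmaFinite μ] (φ : α → α) (hφ : Measurable φ)
    (A : ℝ) (hA0 : 0 < A)
    (hbound : ∀ n : ℕ, 1 ≤ n → ∀ E : Set α, MeasurableSet E →
      μ ((φ^[n]) ⁻¹' E) ≤ ENNReal.ofReal A * μ E)
    (f : α → ℝ) (hf : Measurable f) :
    ∀ n : ℕ, 1 ≤ n → ∀ t : ℝ, 0 < t →
      ∫⁻ s in Set.Ioc (0 : ℝ) t,
          rearrR μ (fun x => (1 / (n : ℝ)) * ∑ i ∈ Finset.range n, f (φ^[i] x)) s ≤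
        ∫⁻ s in Set.Ioc (0 : ℝ) t, rearrR μ f (min 1 A⁻¹ * s) := by
  intro n hn t ht
  calc ∫⁻ s in Set.Ioc (0 : ℝ) t,
        rearrR μ (fun x => (1 / (n : ℝ)) * ∑ i ∈ Finset.range n, f (φ^[i] x)) s
      ≤ ∫⁻ u in Ioi 0, min (ENNReal.ofReal t)
          (distrR μ (fun x => (1 / (n : ℝ)) * ∑ i ∈ Finset.range n, f (φ^[i] x)) u) :=
        lhs_le _ ht
    _ ≤ ∫⁻ u in Ioi 0, min (ENNReal.ofReal t)
          (ENNReal.ofReal (max 1 A) * distrR μ f u) :=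
        middle_le ht (fun l hl => cesaro_tail_le hφ hbound hf hn hl)
    _ ≤ ∫⁻ s in Set.Ioc (0 : ℝ) t, rearrR μ f (min 1 A⁻¹ * s) := rhs_ge f hA0 ht
end

section
/- Let φ : R → R be power-measure-bounded with constant A and suppose additionally there is C > 0 with C μ(E) ≤ μ(φ⁻ⁱ(E)) for all i ∈ ℕ and all measurable E. Then the maximal ergodic operator T_φ^#(f) = sup_{n≥1} (1/n) Σ_{i=0}^{n-1} |f ∘ φⁱ| maps L¹(μ) boundedly into weak-L¹(μ): there is K > 0 with α · μ({T_φ^# f > α}) ≤ K ‖f‖₁ for all f ∈ L¹ and all α > 0. -/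
open Finset MeasureTheory ENNReal
/-- Rising-sun covering lemma along a sequence. -/
lemma riseSun (a : ℕ → ℝ≥0∞) (α : ℝ≥0∞) (N : ℕ) :
    ∀ k s L : ℕ, L - s ≤ k →
      α * ((Finset.Ico s L).filter
        (fun j => ∃ n ≤ N, α * (n + 1) < ∑ i ∈ Finset.range (n + 1), a (j + i))).card
        ≤ ∑ i ∈ Finset.Ico s (L + N), a i := by
  classical
  intro k
  induction k with
  | zero =>
    intro s L h
    have hLs : L ≤ s := by omega
    simp [Finset.Ico_eq_empty_of_le hLs]
  | succ k ih =>
    intro s L h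
    by_cases hsL : L ≤ s
    · simp [Finset.Ico_eq_empty_of_le hsL]
    push_neg at hsL
    set P : ℕ → Prop := fun j => ∃ n ≤ N, α * (n + 1) < ∑ i ∈ Finset.range (n + 1), a (j + i)
      with hP
    by_cases hbad : P s
    · obtain ⟨n, hnN, hn⟩ := hbad
      have hsub : (Finset.Ico s L).filter P ⊆
          Finset.Ico s (s + n + 1) ∪ (Finset.Ico (s + n + 1) L).filter P := by
        intro j hj
        simp only [Finset.mem_filter, Finset.mem_Ico] at hj
        rcases lt_or_ge j (s + n + 1) with hlt | hge
        · exact Finset.mem_union_left _ (Finset.mem_Ico.mpr ⟨hj.1.1, hlt⟩)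
        · exact Finset.mem_union_right _
            (Finset.mem_filter.mpr ⟨Finset.mem_Ico.mpr ⟨hge, hj.1.2⟩, hj.2⟩)
      have hcard : ((Finset.Ico s L).filter P).card ≤
          (n + 1) + ((Finset.Ico (s + n + 1) L).filter P).card := by
        calc ((Finset.Ico s L).filter P).card
            ≤ (Finset.Ico s (s + n + 1) ∪ (Finset.Ico (s + n + 1) L).filter P).card :=
              Finset.card_le_card hsub
          _ ≤ (Finset.Ico s (s + n + 1)).card + ((Finset.Ico (s + n + 1) L).filter P).card :=
              Finset.card_union_le _ _
          _ = (n + 1) + ((Finset.Ico (s + n + 1) L).filter P).card := by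
              rw [Nat.card_Ico]; omega
      have h1 : α * ((Finset.Ico s L).filter P).card ≤
          α * (n + 1) + α * ((Finset.Ico (s + n + 1) L).filter P).card := by
        calc α * ((Finset.Ico s L).filter P).card
            ≤ α * ((n + 1) + ((Finset.Ico (s + n + 1) L).filter P).card) := by
              gcongr
              exact_mod_cast hcard
          _ = α * (n + 1) + α * ((Finset.Ico (s + n + 1) L).filter P).card := by
              push_cast [mul_add]; ring
      have h2 : α * (n + 1) ≤ ∑ i ∈ Finset.Ico s (s + n + 1), a i := by
        have : ∑ i ∈ Finset.Ico s (s + n + 1), a i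
            = ∑ i ∈ Finset.range (n + 1), a (s + i) := by
          rw [Finset.sum_Ico_eq_sum_range]
          have h4 : s + n + 1 - s = n + 1 := by omega
          rw [h4]
        rw [this]; exact hn.le
      have h3 : α * ((Finset.Ico (s + n + 1) L).filter P).card
          ≤ ∑ i ∈ Finset.Ico (s + n + 1) (L + N), a i := ih (s + n + 1) L (by omega)
      calc α * ((Finset.Ico s L).filter P).card
          ≤ ∑ i ∈ Finset.Ico s (s + n + 1), a i + ∑ i ∈ Finset.Ico (s + n + 1) (L + N), a i :=
            h1.trans (add_le_add h2 h3)
        _ = ∑ i ∈ Finset.Ico s (L + N), a i :=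
            Finset.sum_Ico_consecutive _ (by omega) (by omega)
    · have : (Finset.Ico s L).filter P = (Finset.Ico (s + 1) L).filter P := by
        rw [← Finset.insert_Ico_add_one_left_eq_Ico hsL, Finset.filter_insert, if_neg hbad]
      rw [this]
      refine (ih (s + 1) L (by omega)).trans ?_
      exact Finset.sum_le_sum_of_subset (Finset.Ico_subset_Ico (by omega) le_rfl)

open MeasureTheory

/-- The maximal ergodic operator associated with `φ`:
`T_φ^# f = sup_{n ≥ 1} (1/n) ∑_{i=0}^{n-1} |f ∘ φⁱ|` (pointwise, with values in `ℝ≥0∞`). -/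
noncomputable def maxErgodic {α : Type*} (φ : α → α) (f : α → ℝ) (x : α) : ℝ≥0∞ :=
  ⨆ n : ℕ, ((n : ℝ≥0∞) + 1)⁻¹ * ∑ i ∈ Finset.range (n + 1), (‖f (φ^[i] x)‖₊ : ℝ≥0∞)


/-- Converting a normalized-average strict inequality in `ℝ≥0∞`. -/
lemma invMulLt (n : ℕ) (a s : ℝ≥0∞) :
    a < ((n : ℝ≥0∞) + 1)⁻¹ * s ↔ a * ((n : ℝ≥0∞) + 1) < s := by
  rw [← ENNReal.div_eq_inv_mul]
  exact ENNReal.lt_div_iff_mul_lt (Or.inl (by simp))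
    (Or.inl (by simp))


/-- Maximal ergodic theorem: if `φ` is power-measure-bounded with constant `A` and
moreover `C μ(E) ≤ μ(φ⁻ⁱ(E))` for all `i` and all measurable `E`, then the maximal
ergodic operator maps `L¹(μ)` boundedly into weak-`L¹(μ)`: there is `K > 0` with
`α · μ({T_φ^# f > α}) ≤ K ‖f‖₁` for all `f ∈ L¹` and all `α > 0`. -/
theorem maximal_ergodic_weak_L1 {α : Type*} [MeasurableSpace α]
    (μ : Measure α) [SigmaFinite μ] (φ : α → α) (hφ : Measurable φ)
    (A : ℝ≥0∞) (hA0 : 0 < A) (hAtop : A ≠ ⊤)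
    (hbound : ∀ n : ℕ, 1 ≤ n → ∀ E : Set α, MeasurableSet E →
      μ ((φ^[n]) ⁻¹' E) ≤ A * μ E)
    (C : ℝ≥0∞) (hC0 : 0 < C) (hCtop : C ≠ ⊤)
    (hbelow : ∀ i : ℕ, ∀ E : Set α, MeasurableSet E →
      C * μ E ≤ μ ((φ^[i]) ⁻¹' E)) :
    ∃ K : ℝ≥0∞, 0 < K ∧ K ≠ ⊤ ∧
      ∀ f : α → ℝ, MemLp f 1 μ → ∀ a : ℝ≥0∞, 0 < a →
        a * μ {x | a < maxErgodic φ f x} ≤ K * eLpNorm f 1 μ := by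
  classical
  set A' : ℝ≥0∞ := max A 1 with hA'
  have hA'top : A' ≠ ⊤ := by simp [hA', hAtop]
  refine ⟨C⁻¹ * A', ?_, ?_, ?_⟩
  · exact ENNReal.mul_pos (ENNReal.inv_ne_zero.mpr hCtop)
      (one_pos.trans_le (le_max_right A 1)).ne'
  · exact ENNReal.mul_ne_top (ENNReal.inv_ne_top.mpr hC0.ne') hA'top
  intro f hf a ha
  -- a measurable representative of `f`
  set f' : α → ℝ := hf.1.mk f with hf'def
  have hf'meas : Measurable f' := hf.1.stronglyMeasurable_mk.measurable
  have hff' : f =ᵐ[μ] f' := hf.1.ae_eq_mk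
  set S : ℝ≥0∞ := ∫⁻ x, (‖f' x‖₊ : ℝ≥0∞) ∂μ with hS
  have hSnorm : eLpNorm f 1 μ = S := by
    rw [eLpNorm_one_eq_lintegral_enorm]
    exact lintegral_congr_ae (hff'.mono fun x hx => by simp only [hx, enorm_eq_nnnorm])
  -- `f` and `f'` agree along all orbits a.e.
  have horb : ∀ᵐ x ∂μ, ∀ i : ℕ, f (φ^[i] x) = f' (φ^[i] x) := by
    set Z := toMeasurable μ {x | f x ≠ f' x} with hZ
    have hZ0 : μ Z = 0 := by rw [measure_toMeasurable]; exact hff'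
    have hZm : MeasurableSet Z := measurableSet_toMeasurable _ _
    have hpre : ∀ i : ℕ, μ ((φ^[i]) ⁻¹' Z) = 0 := by
      intro i
      cases i with
      | zero => simpa using hZ0
      | succ n =>
        refine le_antisymm ?_ zero_le
        calc μ ((φ^[n + 1]) ⁻¹' Z) ≤ A * μ Z := hbound (n + 1) (by omega) Z hZm
          _ = 0 := by rw [hZ0, mul_zero]
    rw [ae_all_iff]
    intro i
    filter_upwards [measure_eq_zero_iff_ae_notMem.mp (hpre i)] with x hx
    by_contra hne
    exact hx (subset_toMeasurable μ _ hne)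
  have hM : μ {x | a < maxErgodic φ f x} = μ {x | a < maxErgodic φ f' x} := by
    apply measure_congr
    rw [Filter.eventuallyEq_set]
    filter_upwards [horb] with x hx
    have hEq : maxErgodic φ f x = maxErgodic φ f' x := by
      unfold maxErgodic
      refine iSup_congr fun n => ?_
      congr 1
      exact Finset.sum_congr rfl fun i _ => by rw [hx i]
    simp [hEq]
  -- the exhausting sets
  set E : ℕ → Set α := fun N => {x | ∃ n ≤ N,
      a * ((n : ℝ≥0∞) + 1) < ∑ i ∈ Finset.range (n + 1), (‖f' (φ^[i] x)‖₊ : ℝ≥0∞)} with hE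
  have hsum_meas : ∀ n : ℕ,
      Measurable (fun x => ∑ i ∈ Finset.range (n + 1), (‖f' (φ^[i] x)‖₊ : ℝ≥0∞)) := fun n =>
    Finset.measurable_sum _ fun i _ => (hf'meas.comp (hφ.iterate i)).nnnorm.coe_nnreal_ennreal
  have hEmeas : ∀ N, MeasurableSet (E N) := by
    intro N
    have hrw : E N = ⋃ n ∈ Finset.range (N + 1),
        {x | a * ((n : ℝ≥0∞) + 1) < ∑ i ∈ Finset.range (n + 1), (‖f' (φ^[i] x)‖₊ : ℝ≥0∞)} := by
      ext x; simp [hE, Nat.lt_succ_iff]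
    rw [hrw]
    exact (Finset.range (N + 1)).measurableSet_biUnion
      fun n _ => measurableSet_lt measurable_const (hsum_meas n)
  have hset : {x | a < maxErgodic φ f' x} = ⋃ N, E N := by
    ext x
    simp only [Set.mem_setOf_eq, Set.mem_iUnion, maxErgodic, lt_iSup_iff, hE]
    constructor
    · rintro ⟨n, hn⟩
      exact ⟨n, n, le_rfl, (invMulLt n a _).mp hn⟩
    · rintro ⟨N, n, _, hn⟩
      exact ⟨n, (invMulLt n a _).mpr hn⟩
  have hmono : Monotone E := by
    intro N M h x hx
    obtain ⟨n, hn, hlt⟩ := hx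
    exact ⟨n, hn.trans h, hlt⟩
  have hUnion : μ (⋃ N, E N) = ⨆ N, μ (E N) :=
    (hmono.directed_le).measure_iUnion
  -- integral bound for each iterate
  have hInt : ∀ i : ℕ, ∫⁻ x, (‖f' (φ^[i] x)‖₊ : ℝ≥0∞) ∂μ ≤ A' * S := by
    intro i
    have hmap : Measure.map (φ^[i]) μ ≤ A' • μ := by
      rw [Measure.le_iff]
      intro s hs
      rw [Measure.map_apply (hφ.iterate i) hs, Measure.smul_apply, smul_eq_mul]
      cases i with
      | zero => simpa using le_mul_of_one_le_left' (le_max_right A 1)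
      | succ n =>
        exact (hbound (n + 1) (by omega) s hs).trans (mul_le_mul_left (le_max_left A 1) _)
    calc ∫⁻ x, (‖f' (φ^[i] x)‖₊ : ℝ≥0∞) ∂μ
        = ∫⁻ y, (‖f' y‖₊ : ℝ≥0∞) ∂(Measure.map (φ^[i]) μ) :=
          (lintegral_map hf'meas.nnnorm.coe_nnreal_ennreal (hφ.iterate i)).symm
      _ ≤ ∫⁻ y, (‖f' y‖₊ : ℝ≥0∞) ∂(A' • μ) := lintegral_mono' hmap le_rfl
      _ = A' * S := by rw [lintegral_smul_measure, smul_eq_mul]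
  -- the key per-N estimate
  have key : ∀ N : ℕ, C * (a * μ (E N)) ≤ A' * S := by
    intro N
    have hL : ∀ L : ℕ, C * (a * μ (E N)) * L ≤ A' * S * L + A' * S * N := by
      intro L
      have step1 : (L : ℝ≥0∞) * (C * μ (E N)) ≤ ∑ j ∈ Finset.range L, μ ((φ^[j]) ⁻¹' E N) := by
        calc (L : ℝ≥0∞) * (C * μ (E N)) = ∑ _j ∈ Finset.range L, C * μ (E N) := by
              rw [Finset.sum_const, Finset.card_range, nsmul_eq_mul]
          _ ≤ ∑ j ∈ Finset.range L, μ ((φ^[j]) ⁻¹' E N) :=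
              Finset.sum_le_sum fun j _ => hbelow j _ (hEmeas N)
      have expand : ∀ j : ℕ, μ ((φ^[j]) ⁻¹' E N)
          = ∫⁻ x, (if φ^[j] x ∈ E N then (1 : ℝ≥0∞) else 0) ∂μ := by
        intro j
        rw [← lintegral_indicator_one ((hEmeas N).preimage (hφ.iterate j))]
        congr 1
        funext x
        simp [Set.indicator_apply, Set.mem_preimage]
      have hitemeas : ∀ j : ℕ,
          Measurable (fun x => (if φ^[j] x ∈ E N then (1 : ℝ≥0∞) else 0)) := by
        intro j
        have : (fun x => (if φ^[j] x ∈ E N then (1 : ℝ≥0∞) else 0))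
            = Set.indicator ((φ^[j]) ⁻¹' E N) (fun _ => 1) := by
          funext x; simp [Set.indicator_apply, Set.mem_preimage]
        rw [this]
        exact measurable_const.indicator ((hEmeas N).preimage (hφ.iterate j))
      have step2 : a * ∑ j ∈ Finset.range L, μ ((φ^[j]) ⁻¹' E N)
          ≤ ((L : ℝ≥0∞) + N) * (A' * S) := by
        calc a * ∑ j ∈ Finset.range L, μ ((φ^[j]) ⁻¹' E N)
            = ∫⁻ x, a * ∑ j ∈ Finset.range L,
                (if φ^[j] x ∈ E N then (1 : ℝ≥0∞) else 0) ∂μ := by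
              rw [lintegral_const_mul _ (Finset.measurable_sum _ fun j _ => hitemeas j),
                lintegral_finset_sum _ fun j _ => hitemeas j]
              congr 1
              exact Finset.sum_congr rfl fun j _ => expand j
          _ ≤ ∫⁻ x, ∑ i ∈ Finset.range (L + N), (‖f' (φ^[i] x)‖₊ : ℝ≥0∞) ∂μ := by
              apply lintegral_mono
              intro x
              show a * ∑ j ∈ Finset.range L, (if φ^[j] x ∈ E N then (1 : ℝ≥0∞) else 0)
                ≤ ∑ i ∈ Finset.range (L + N), (‖f' (φ^[i] x)‖₊ : ℝ≥0∞)
              have hpt := riseSun (fun i => (‖f' (φ^[i] x)‖₊ : ℝ≥0∞)) a N L 0 L (by omega)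
              rw [← Finset.range_eq_Ico] at hpt
              have hcount : ∑ j ∈ Finset.range L,
                  (if φ^[j] x ∈ E N then (1 : ℝ≥0∞) else 0)
                  = ((Finset.range L).filter (fun j => ∃ n ≤ N,
                      a * ((n : ℝ≥0∞) + 1) < ∑ i ∈ Finset.range (n + 1),
                        (‖f' (φ^[j + i] x)‖₊ : ℝ≥0∞))).card := by
                rw [Finset.sum_boole]
                congr 2
                apply Finset.filter_congr
                intro j _
                simp only [hE, Set.mem_setOf_eq]
                constructor
                · rintro ⟨n, hn, hlt⟩
                  refine ⟨n, hn, ?_⟩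
                  refine lt_of_lt_of_eq hlt (Finset.sum_congr rfl fun i _ => ?_)
                  rw [Nat.add_comm j i, Function.iterate_add_apply]
                · rintro ⟨n, hn, hlt⟩
                  refine ⟨n, hn, ?_⟩
                  refine lt_of_lt_of_eq hlt (Finset.sum_congr rfl fun i _ => ?_)
                  rw [Nat.add_comm j i, Function.iterate_add_apply]
              rw [hcount]
              simpa using hpt
          _ = ∑ i ∈ Finset.range (L + N), ∫⁻ x, (‖f' (φ^[i] x)‖₊ : ℝ≥0∞) ∂μ :=
              lintegral_finset_sum _ fun i _ => (hf'meas.comp (hφ.iterate i)).nnnorm.coe_nnreal_ennreal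
          _ ≤ ∑ _i ∈ Finset.range (L + N), A' * S := Finset.sum_le_sum fun i _ => hInt i
          _ = ((L : ℝ≥0∞) + N) * (A' * S) := by
              rw [Finset.sum_const, Finset.card_range, nsmul_eq_mul]
              push_cast
              ring
      calc C * (a * μ (E N)) * L = a * ((L : ℝ≥0∞) * (C * μ (E N))) := by ring
        _ ≤ a * ∑ j ∈ Finset.range L, μ ((φ^[j]) ⁻¹' E N) := by gcongr
        _ ≤ ((L : ℝ≥0∞) + N) * (A' * S) := step2
        _ = A' * S * L + A' * S * N := by ring
    by_cases hQ : A' * S = ⊤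
    · simp [hQ]
    apply ENNReal.le_of_forall_pos_le_add
    intro ε hε _
    have hεtop : (ε : ℝ≥0∞) ≠ 0 := by exact_mod_cast hε.ne'
    obtain ⟨L, hLgt⟩ := ENNReal.exists_nat_gt
      (show A' * S * N / ε ≠ ⊤ from
        (ENNReal.div_lt_top (ENNReal.mul_ne_top hQ (ENNReal.natCast_ne_top N)) hεtop).ne)
    have hL0 : (L : ℝ≥0∞) ≠ 0 := by
      have : (0 : ℝ≥0∞) ≤ A' * S * N / ε := zero_le
      have : (0 : ℝ≥0∞) < L := lt_of_le_of_lt this hLgt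
      exact_mod_cast this.ne'
    have hNL : A' * S * N ≤ (ε : ℝ≥0∞) * L := by
      have h1 : A' * S * ↑N / ↑ε ≤ (L : ℝ≥0∞) := hLgt.le
      rw [ENNReal.div_le_iff_le_mul (Or.inl hεtop) (Or.inl ENNReal.coe_ne_top)] at h1
      exact h1.trans_eq (mul_comm _ _)
    have hfinal : C * (a * μ (E N)) * L ≤ (A' * S + ε) * L := by
      calc C * (a * μ (E N)) * L ≤ A' * S * L + A' * S * N := hL L
        _ ≤ A' * S * L + ε * L := by gcongr
        _ = (A' * S + ε) * L := by ring
    exact (ENNReal.mul_le_mul_iff_left hL0 (ENNReal.natCast_ne_top L)).mp hfinal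
  -- assemble
  rw [hM, hSnorm, hset, hUnion, ENNReal.mul_iSup]
  refine iSup_le fun N => ?_
  have hstep : a * μ (E N) = C⁻¹ * (C * (a * μ (E N))) := by
    rw [← mul_assoc, ENNReal.inv_mul_cancel hC0.ne' hCtop, one_mul]
  calc a * μ (E N) = C⁻¹ * (C * (a * μ (E N))) := hstep
    _ ≤ C⁻¹ * (A' * S) := mul_le_mul_right (key N) _
    _ = C⁻¹ * A' * S := by rw [mul_assoc]
end
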